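/- In the logistic model with y | X ~ Bernoulli(f(X^⊤β)) and X ~ N(0, I_p), where f(u) = e^u/(1+e^u), the chi-square affinity between two parameter values β and β' at the null β₀ = 0 satisfies ∫ p(X,y;β) p(X,y;β') / p(X,y;0) dX dy = E_{X~N(0,I_p)}[1 + tanh(X^⊤β/2)·tanh(X^⊤β'/2)], where p(X,y;β) denotes the joint density of (X,y) and p(X,y;0) = 2^{-1}(2π)^{-p/2}e^{-‖X‖²/2}. -/

import Mathlib

/-!
The logistic density factors as `p(X, y; β) = φ(X) · b(σ(Xᵀβ), y)`, where `φ` is the standard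
Gaussian density on `ℝᵖ`, `σ` the sigmoid and `b(q, y) = q^y (1 - q)^(1 - y)` the Bernoulli mass.
At `β = 0` the Bernoulli factor is `1/2`, so the ratio in the integrand is `2 φ(X) b(s, y) b(t, y)`
with `s = σ(Xᵀβ)`, `t = σ(Xᵀβ')`. Summing over `y ∈ {0, 1}` gives
`2 (s t + (1 - s)(1 - t)) = 1 + (2s - 1)(2t - 1)`, and `2 σ(u) - 1 = tanh(u/2)`; integrating
against `φ` is taking the expectation under `N(0, I_p)`.
-/

open MeasureTheory ProbabilityTheory

/-- Joint density of `(X, y)` in the logistic model with `X ~ N(0, I_p)`,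
`y | X ~ Bernoulli(f(Xᵀβ))`, `f(u) = eᵘ/(1+eᵘ)`, where `y ∈ {0,1}`. -/
noncomputable def logisticPdf (p : ℕ) (β : Fin p → ℝ) (x : Fin p → ℝ) (y : ℕ) : ℝ :=
  (2 * Real.pi) ^ (-(p : ℝ) / 2) * Real.exp (-(∑ i, (x i) ^ 2) / 2) *
    (Real.exp (∑ i, x i * β i) / (1 + Real.exp (∑ i, x i * β i))) ^ y *
    (1 - Real.exp (∑ i, x i * β i) / (1 + Real.exp (∑ i, x i * β i))) ^ (1 - y)

open Real
open scoped NNReal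

namespace MeasureTheory.Measure

variable {ι : Type*} [Fintype ι]

theorem pi_withDensity_ofReal {X : ι → Type*} [∀ i, MeasurableSpace (X i)]
    (μ : ∀ i, Measure (X i)) [∀ i, SigmaFinite (μ i)] {f : ∀ i, X i → ℝ}
    (hf : ∀ i, Integrable (f i) (μ i)) (hf0 : ∀ i x, 0 ≤ f i x) :
    Measure.pi (fun i => (μ i).withDensity fun t => ENNReal.ofReal (f i t)) =
      (Measure.pi μ).withDensity fun x => ENNReal.ofReal (∏ i, f i (x i)) := by
  refine pi_eq fun s hs => ?_
  rw [withDensity_apply _ (.univ_pi hs),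
    ← ofReal_integral_eq_lintegral_ofReal (Integrable.fintype_prod_dep hf).integrableOn
      (ae_of_all _ fun x => Finset.prod_nonneg fun i _ => hf0 i (x i)),
    restrict_pi_pi, integral_fintype_prod_eq_prod,
    ENNReal.ofReal_prod_of_nonneg fun i _ => setIntegral_nonneg (hs i) fun t _ => hf0 i t]
  refine Finset.prod_congr rfl fun i _ => ?_
  rw [withDensity_apply _ (hs i),
    ofReal_integral_eq_lintegral_ofReal (hf i).integrableOn (ae_of_all _ (hf0 i))]

theorem pi_gaussianReal_eq_withDensity (m : ι → ℝ) {v : ι → ℝ≥0} (hv : ∀ i, v i ≠ 0) :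
    Measure.pi (fun i => gaussianReal (m i) (v i)) =
      volume.withDensity fun x => ENNReal.ofReal (∏ i, gaussianPDFReal (m i) (v i) (x i)) := by
  simp_rw [gaussianReal_of_var_ne_zero _ (hv _)]
  exact pi_withDensity_ofReal _ (fun i => integrable_gaussianPDFReal _ _)
    fun i => gaussianPDFReal_nonneg _ _

end MeasureTheory.Measure

theorem integral_pi_gaussianReal {ι : Type*} [Fintype ι] (m : ι → ℝ) {v : ι → ℝ≥0}
    (hv : ∀ i, v i ≠ 0) (g : (ι → ℝ) → ℝ) :
    ∫ x, g x ∂Measure.pi (fun i => gaussianReal (m i) (v i)) =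
      ∫ x, (∏ i, gaussianPDFReal (m i) (v i) (x i)) * g x := by
  have hmeas : Measurable fun x : ι → ℝ => ∏ i, gaussianPDFReal (m i) (v i) (x i) :=
    Finset.measurable_prod _ fun i _ =>
      (measurable_gaussianPDFReal _ _).comp (measurable_pi_apply i)
  rw [Measure.pi_gaussianReal_eq_withDensity m hv,
    integral_withDensity_eq_integral_toReal_smul hmeas.ennreal_ofReal
      (ae_of_all _ fun _ => ENNReal.ofReal_lt_top)]
  refine integral_congr_ae (ae_of_all _ fun x => ?_)
  dsimp only
  rw [ENNReal.toReal_ofReal (Finset.prod_nonneg fun i _ => gaussianPDFReal_nonneg _ _ _),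
    smul_eq_mul]

theorem prod_gaussianPDFReal_zero_one {ι : Type*} [Fintype ι] (x : ι → ℝ) :
    ∏ i, gaussianPDFReal 0 1 (x i) =
      (2 * π) ^ (-(Fintype.card ι : ℝ) / 2) * exp (-(∑ i, x i ^ 2) / 2) := by
  have h2π : (0 : ℝ) ≤ 2 * π := by positivity
  simp only [gaussianPDFReal, NNReal.coe_one, mul_one, sub_zero, Finset.prod_mul_distrib,
    Finset.prod_const, ← exp_sum, Finset.card_univ]
  congr 1
  · rw [sqrt_eq_rpow, ← rpow_neg_one, ← rpow_mul h2π, ← rpow_mul_natCast h2π]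
    ring_nf
  · rw [← Finset.sum_div, Finset.sum_neg_distrib, neg_div]

theorem exp_div_one_add_exp (u : ℝ) : exp u / (1 + exp u) = sigmoid u := by
  rw [sigmoid_def, exp_neg]
  field_simp
  ring

theorem tanh_half_eq_two_mul_sigmoid_sub_one (u : ℝ) : tanh (u / 2) = 2 * sigmoid u - 1 := by
  have h : exp (u / 2) * exp (u / 2) = exp u := by rw [← exp_add, add_halves]
  rw [tanh_eq_sinh_div_cosh, sinh_eq, cosh_eq, sigmoid_def, exp_neg, exp_neg, ← h]
  field_simp
  ring

def bernoulliPMFReal (q : ℝ) (y : ℕ) : ℝ := q ^ y * (1 - q) ^ (1 - y)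

section bernoulliPMFReal

variable {q : ℝ}

theorem continuous_bernoulliPMFReal (y : ℕ) : Continuous fun q => bernoulliPMFReal q y := by
  unfold bernoulliPMFReal
  fun_prop

theorem bernoulliPMFReal_nonneg (h0 : 0 ≤ q) (h1 : q ≤ 1) (y : ℕ) : 0 ≤ bernoulliPMFReal q y := by
  have := sub_nonneg.2 h1
  unfold bernoulliPMFReal
  positivity

theorem bernoulliPMFReal_le_one (h0 : 0 ≤ q) (h1 : q ≤ 1) (y : ℕ) : bernoulliPMFReal q y ≤ 1 :=
  mul_le_one₀ (pow_le_one₀ h0 h1) (pow_nonneg (sub_nonneg.2 h1) _)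
    (pow_le_one₀ (sub_nonneg.2 h1) (by linarith))

theorem bernoulliPMFReal_inv_two {y : ℕ} (hy : y ≤ 1) : bernoulliPMFReal 2⁻¹ y = 2⁻¹ := by
  interval_cases y <;> norm_num [bernoulliPMFReal]

theorem two_mul_sum_bernoulliPMFReal_mul (s t : ℝ) :
    2 * ∑ y ∈ Finset.range 2, bernoulliPMFReal s y * bernoulliPMFReal t y =
      1 + (2 * s - 1) * (2 * t - 1) := by
  simp only [Finset.sum_range_succ, Finset.sum_range_zero, bernoulliPMFReal]
  ring

end bernoulliPMFReal

theorem integrable_bernoulliPMFReal_sigmoid_mul {E : Type*} [MeasurableSpace E] {μ : Measure E}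
    [IsFiniteMeasure μ] {g h : E → ℝ} (hg : Measurable g) (hh : Measurable h) (y : ℕ) :
    Integrable (fun x => bernoulliPMFReal (sigmoid (g x)) y * bernoulliPMFReal (sigmoid (h x)) y)
      μ := by
  have hmeas {k : E → ℝ} (hk : Measurable k) :
      Measurable fun x => bernoulliPMFReal (sigmoid (k x)) y :=
    (continuous_bernoulliPMFReal y).measurable.comp (continuous_sigmoid.measurable.comp hk)
  refine .of_bound ((hmeas hg).mul (hmeas hh)).aestronglyMeasurable 1 (ae_of_all _ fun x => ?_)
  have hbound (u : ℝ) : |bernoulliPMFReal (sigmoid u) y| ≤ 1 := by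
    rw [abs_of_nonneg (bernoulliPMFReal_nonneg (sigmoid_nonneg u) (sigmoid_le_one u) y)]
    exact bernoulliPMFReal_le_one (sigmoid_nonneg u) (sigmoid_le_one u) y
  rw [norm_eq_abs, abs_mul]
  exact mul_le_one₀ (hbound _) (abs_nonneg _) (hbound _)

theorem logisticPdf_eq (p : ℕ) (β x : Fin p → ℝ) (y : ℕ) :
    logisticPdf p β x y =
      (∏ i, gaussianPDFReal 0 1 (x i)) * bernoulliPMFReal (sigmoid (∑ i, x i * β i)) y := by
  rw [logisticPdf, prod_gaussianPDFReal_zero_one, Fintype.card_fin, exp_div_one_add_exp,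
    bernoulliPMFReal, mul_assoc]

theorem logisticPdf_mul_div_logisticPdf_zero (p : ℕ) (β β' x : Fin p → ℝ) {y : ℕ} (hy : y ≤ 1) :
    logisticPdf p β x y * logisticPdf p β' x y / logisticPdf p 0 x y =
      (∏ i, gaussianPDFReal 0 1 (x i)) * (2 * (bernoulliPMFReal (sigmoid (∑ i, x i * β i)) y *
        bernoulliPMFReal (sigmoid (∑ i, x i * β' i)) y)) := by
  have hφ : 0 < ∏ i, gaussianPDFReal 0 1 (x i) :=
    Finset.prod_pos fun i _ => gaussianPDFReal_pos _ _ _ one_ne_zero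
  simp only [logisticPdf_eq, Pi.zero_apply, mul_zero, Finset.sum_const_zero, sigmoid_zero,
    bernoulliPMFReal_inv_two hy]
  field_simp

theorem stmt17 (p : ℕ) (β β' : Fin p → ℝ) :
    ∑ y ∈ Finset.range 2,
        ∫ x : Fin p → ℝ,
          logisticPdf p β x y * logisticPdf p β' x y / logisticPdf p 0 x y
      = ∫ x : Fin p → ℝ,
          (1 + Real.tanh ((∑ i, x i * β i) / 2) * Real.tanh ((∑ i, x i * β' i) / 2))
          ∂(Measure.pi fun _ => gaussianReal 0 1) := by
  have hη (b : Fin p → ℝ) : Measurable fun x : Fin p → ℝ => ∑ i, x i * b i :=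
    (by fun_prop : Continuous fun x : Fin p → ℝ => ∑ i, x i * b i).measurable
  have hterm (y : ℕ) (hy : y ∈ Finset.range 2) :
      ∫ x : Fin p → ℝ, logisticPdf p β x y * logisticPdf p β' x y / logisticPdf p 0 x y =
        ∫ x, 2 * (bernoulliPMFReal (sigmoid (∑ i, x i * β i)) y *
          bernoulliPMFReal (sigmoid (∑ i, x i * β' i)) y)
          ∂(Measure.pi fun _ => gaussianReal 0 1) := by
    rw [integral_pi_gaussianReal _ fun _ => one_ne_zero]
    simp_rw [logisticPdf_mul_div_logisticPdf_zero p β β' _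
      (Nat.le_of_lt_succ (Finset.mem_range.1 hy))]
  rw [Finset.sum_congr rfl hterm, ← integral_finsetSum _ fun y _ =>
    (integrable_bernoulliPMFReal_sigmoid_mul (hη β) (hη β') y).const_mul 2]
  refine integral_congr_ae (ae_of_all _ fun x => ?_)
  simp only [tanh_half_eq_two_mul_sigmoid_sub_one, ← two_mul_sum_bernoulliPMFReal_mul,
    Finset.mul_sum]
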